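/- Let X = ∏_{i=1}^{n} [r_i, s_i] ∩ ℤⁿ be a digital cube. Then its corner set A = ∏_{i=1}^{n} {r_i, s_i} is a freezing set for (X, c_1). -/

import Mathlib

/-- A κ-path of some length m in S from a to b (consecutive points equal or adjacent). -/
def DigPath {α : Type*} (κ : α → α → Prop) (S : Set α) (a b : α) : Prop :=
  ∃ (m : ℕ) (r : ℕ → α), r 0 = a ∧ r m = b ∧ (∀ k, k ≤ m → r k ∈ S) ∧
    ∀ k, k < m → r k = r (k + 1) ∨ κ (r k) (r (k + 1))

/-- S is κ-connected: any two points of S are joined by a κ-path in S. -/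
def DigConnected {α : Type*} (κ : α → α → Prop) (S : Set α) : Prop :=
  ∀ a ∈ S, ∀ b ∈ S, DigPath κ S a b

/-- (κ,λ)-continuity via the adjacency characterization. -/
def DigCont {α β : Type*} (κ : α → α → Prop) (lam : β → β → Prop)
    (X : Set α) (f : α → β) : Prop :=
  ∀ x ∈ X, ∀ y ∈ X, κ x y → f x = f y ∨ lam (f x) (f y)

/-- A ⊆ X is a freezing set for (X, κ). -/
def FreezingSet {α : Type*} (κ : α → α → Prop) (X A : Set α) : Prop :=
  A ⊆ X ∧ ∀ g : α → α, (∀ x ∈ X, g x ∈ X) → DigCont κ κ X g →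
    (∀ a ∈ A, g a = a) → ∀ x ∈ X, g x = x

/-- The c_u adjacency on ℤⁿ: distinct points differing by exactly 1 in at most u
coordinates and equal in all others. -/
def cAdj (n u : ℕ) (x y : Fin n → ℤ) : Prop :=
  x ≠ y ∧ (∀ i, x i = y i ∨ |x i - y i| = 1) ∧
    (Finset.univ.filter (fun i => x i ≠ y i)).card ≤ u

/-- The boundary of A ⊆ ℤⁿ: points of A that are c_1-adjacent to a point outside A. -/
def Bd (n : ℕ) (A : Set (Fin n → ℤ)) : Set (Fin n → ℤ) :=
  {x ∈ A | ∃ y, y ∉ A ∧ cAdj n 1 x y}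

/-!
A c₁-continuous self-map `g` of the cube does not increase the ℓ¹ distance, because any two
points of the cube are joined by a c₁-path inside it whose length is their ℓ¹ distance. For a
point `z` of the cube and a corner `c`, the distances from `z` to `c` and to the opposite corner
`r + s - c` add up to the diameter `‖s - r‖₁`, so a map fixing all corners preserves the distance
from `z` to every corner. Finally the coordinate `z i` can be read off the distances from `z` to
the corner `r` and to the corner obtained from `r` by moving its `i`-th coordinate to `s i`.
-/

open Finset Function

namespace DigitalCube

variable {n : ℕ}

def l1Dist (x y : Fin n → ℤ) : ℤ := ∑ i, |x i - y i|

def corners (r s : Fin n → ℤ) : Set (Fin n → ℤ) := {x | ∀ i, x i = r i ∨ x i = s i}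

@[simp]
lemma l1Dist_self (x : Fin n → ℤ) : l1Dist x x = 0 := by
  simp [l1Dist]

lemma l1Dist_comm (x y : Fin n → ℤ) : l1Dist x y = l1Dist y x := by
  simp only [l1Dist, abs_sub_comm]

lemma l1Dist_triangle (x y z : Fin n → ℤ) : l1Dist x z ≤ l1Dist x y + l1Dist y z := by
  rw [l1Dist, l1Dist, l1Dist, ← sum_add_distrib]
  exact sum_le_sum fun i _ => abs_sub_le (x i) (y i) (z i)

lemma l1Dist_nonneg (x y : Fin n → ℤ) : 0 ≤ l1Dist x y :=
  sum_nonneg fun _ _ => abs_nonneg _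

lemma eq_of_l1Dist_eq_zero {x y : Fin n → ℤ} (h : l1Dist x y = 0) : x = y := by
  funext i
  have := (sum_eq_zero_iff_of_nonneg fun j _ => abs_nonneg (x j - y j)).mp h i (mem_univ i)
  rwa [abs_eq_zero, sub_eq_zero] at this

lemma l1Dist_update_left (x y : Fin n → ℤ) (i : Fin n) (v : ℤ) :
    l1Dist (update x i v) y + |x i - y i| = l1Dist x y + |v - y i| := by
  have hupd : (fun j => |update x i v j - y j|) = update (fun j => |x j - y j|) i |v - y i| := by
    funext j
    by_cases hj : j = i
    · subst hj; simp
    · simp [hj]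
  rw [l1Dist, hupd, sum_update_of_mem (mem_univ i), l1Dist,
    ← add_sum_erase _ _ (mem_univ i), sdiff_singleton_eq_erase]
  ring

lemma l1Dist_le_one_of_cAdj {x y : Fin n → ℤ} (h : cAdj n 1 x y) : l1Dist x y ≤ 1 := by
  obtain ⟨-, hcoord, hcard⟩ := h
  have hsupp : l1Dist x y = ∑ i ∈ univ.filter (fun i => x i ≠ y i), |x i - y i| := by
    refine (sum_subset (filter_subset _ _) fun i _ hi => ?_).symm
    simp only [mem_filter, mem_univ, true_and, not_not] at hi
    simp [hi]
  calc l1Dist x y = ∑ i ∈ univ.filter (fun i => x i ≠ y i), |x i - y i| := hsupp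
    _ ≤ ∑ _i ∈ univ.filter (fun j => x j ≠ y j), (1 : ℤ) :=
        sum_le_sum fun i hi => ((hcoord i).resolve_left (mem_filter.mp hi).2).le
    _ ≤ 1 := by simpa using hcard

lemma cAdj_update {x : Fin n → ℤ} {i : Fin n} {v : ℤ} (hv : |x i - v| = 1) :
    cAdj n 1 x (update x i v) := by
  refine ⟨fun h => ?_, fun j => ?_, ?_⟩
  · have hxi : x i = v := by simpa using congrFun h i
    simp [hxi] at hv
  · by_cases hj : j = i
    · subst hj; simp [hv]
    · simp [hj]
  · calc (univ.filter fun j => x j ≠ update x i v j).card ≤ ({i} : Finset (Fin n)).card :=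
          card_le_card fun j hj => by
            by_contra hji
            simp_all
      _ = 1 := card_singleton i

lemma exists_cAdj_l1Dist_add_one_eq {r s a b : Fin n → ℤ} (ha : a ∈ Set.Icc r s)
    (hb : b ∈ Set.Icc r s) (hab : a ≠ b) :
    ∃ a' ∈ Set.Icc r s, cAdj n 1 a a' ∧ l1Dist a' b + 1 = l1Dist a b := by
  obtain ⟨i, hi⟩ := Function.ne_iff.mp hab
  have hra : r i ≤ a i := ha.1 i
  have has : a i ≤ s i := ha.2 i
  have hrb : r i ≤ b i := hb.1 i
  have hsb : b i ≤ s i := hb.2 i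
  obtain ⟨v, hv, hvab⟩ : ∃ v, |a i - v| = 1 ∧ |v - b i| + 1 = |a i - b i| ∧
      r i ≤ v ∧ v ≤ s i := by
    rcases lt_or_gt_of_ne hi with h | h
    · exact ⟨a i + 1, by simp, by simp only [abs_eq_max_neg]; omega, by omega, by omega⟩
    · exact ⟨a i - 1, by simp, by simp only [abs_eq_max_neg]; omega, by omega, by omega⟩
  refine ⟨update a i v, ⟨fun j => ?_, fun j => ?_⟩, cAdj_update hv, ?_⟩
  · by_cases hj : j = i
    · subst hj; simpa using hvab.2.1
    · simpa [hj] using ha.1 j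
  · by_cases hj : j = i
    · subst hj; simpa using hvab.2.2
    · simpa [hj] using ha.2 j
  · have := l1Dist_update_left a b i v
    linarith [hvab.1]

lemma l1Dist_map_le_of_digCont {r s : Fin n → ℤ} {g : (Fin n → ℤ) → Fin n → ℤ}
    (hg : DigCont (cAdj n 1) (cAdj n 1) (Set.Icc r s) g) {a b : Fin n → ℤ}
    (ha : a ∈ Set.Icc r s) (hb : b ∈ Set.Icc r s) : l1Dist (g a) (g b) ≤ l1Dist a b := by
  obtain ⟨m, hm⟩ := Int.eq_ofNat_of_zero_le (l1Dist_nonneg a b)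
  induction m generalizing a with
  | zero =>
    obtain rfl := eq_of_l1Dist_eq_zero hm
    simp
  | succ m ih =>
    have hab : a ≠ b := by
      rintro rfl
      simp at hm
      omega
    obtain ⟨a', ha', hadj, hcloser⟩ := exists_cAdj_l1Dist_add_one_eq ha hb hab
    have hstep : l1Dist (g a) (g a') ≤ 1 := by
      rcases hg a ha a' ha' hadj with h | h
      · simp [h]
      · exact l1Dist_le_one_of_cAdj h
    have hrest := ih ha' (by omega)
    linarith [l1Dist_triangle (g a) (g a') (g b)]

lemma corners_subset_Icc {r s : Fin n → ℤ} (hrs : r ≤ s) : corners r s ⊆ Set.Icc r s :=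
  fun c hc => ⟨fun i => by rcases hc i with h | h <;> simp [h, hrs i],
    fun i => by rcases hc i with h | h <;> simp [h, hrs i]⟩

lemma add_sub_mem_corners {r s c : Fin n → ℤ} (hc : c ∈ corners r s) :
    r + s - c ∈ corners r s := fun i => by
  rcases hc i with h | h <;> simp [h]

lemma l1Dist_add_l1Dist_opposite {r s c z : Fin n → ℤ} (hz : z ∈ Set.Icc r s)
    (hc : c ∈ corners r s) : l1Dist z c + l1Dist z (r + s - c) = l1Dist r s := by
  rw [l1Dist, l1Dist, l1Dist, ← sum_add_distrib]
  refine sum_congr rfl fun i _ => ?_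
  have hr : r i ≤ z i := hz.1 i
  have hs : z i ≤ s i := hz.2 i
  rcases hc i with h | h <;> simp only [Pi.add_apply, Pi.sub_apply, abs_eq_max_neg] <;> omega

lemma l1Dist_corner_eq_of_le {r s x y c : Fin n → ℤ} (hx : x ∈ Set.Icc r s)
    (hy : y ∈ Set.Icc r s) (hle : ∀ c ∈ corners r s, l1Dist y c ≤ l1Dist x c)
    (hc : c ∈ corners r s) : l1Dist y c = l1Dist x c := by
  linarith [hle c hc, hle _ (add_sub_mem_corners hc), l1Dist_add_l1Dist_opposite hx hc, l1Dist_add_l1Dist_opposite hy hc]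

lemma l1Dist_update_corner {r s z : Fin n → ℤ} (hz : z ∈ Set.Icc r s) (i : Fin n) :
    l1Dist z (update r i (s i)) + (z i - r i) = l1Dist z r + (s i - z i) := by
  have hupd := l1Dist_update_left r z i (s i)
  rw [l1Dist_comm r, l1Dist_comm, abs_sub_comm (r i), abs_sub_comm (s i),
    abs_of_nonneg (sub_nonneg.mpr (hz.1 i)), abs_of_nonpos (sub_nonpos.mpr (hz.2 i))] at hupd
  linarith

lemma eq_of_l1Dist_corners_eq {r s x y : Fin n → ℤ} (hx : x ∈ Set.Icc r s)
    (hy : y ∈ Set.Icc r s) (h : ∀ c ∈ corners r s, l1Dist y c = l1Dist x c) : y = x := by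
  funext i
  have hcorner : update r i (s i) ∈ corners r s := fun j => by
    by_cases hj : j = i
    · subst hj; simp
    · simp [hj]
  linarith [h r fun j => Or.inl rfl, h _ hcorner, l1Dist_update_corner hx i,
    l1Dist_update_corner hy i]

end DigitalCube

open DigitalCube in
/-- The corner set of a digital cube is a freezing set for (X, c_1). -/
theorem corners_freezingSet_c1 {n : ℕ} (r s : Fin n → ℤ) (hrs : ∀ i, r i ≤ s i)
    (X : Set (Fin n → ℤ)) (hX : X = {x | ∀ i, r i ≤ x i ∧ x i ≤ s i})
    (A : Set (Fin n → ℤ)) (hA : A = {x | ∀ i, x i = r i ∨ x i = s i}) :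
    FreezingSet (cAdj n 1) X A := by
  have hIcc : X = Set.Icc r s := by
    ext x
    simp [hX, Pi.le_def, forall_and]
  have hcorners : A = corners r s := hA
  subst hIcc hcorners
  refine ⟨corners_subset_Icc hrs, fun g hgX hg hfix x hx => ?_⟩
  have hle : ∀ c ∈ corners r s, l1Dist (g x) c ≤ l1Dist x c := fun c hc => by
    simpa [hfix c hc] using l1Dist_map_le_of_digCont hg hx (corners_subset_Icc hrs hc)
  exact eq_of_l1Dist_corners_eq hx (hgX x hx)
    fun c hc => l1Dist_corner_eq_of_le hx (hgX x hx) hle hc
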